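/- Let T be an even-degree edge multiset whose components are the subtours T₁,...,T_d, let F be a forest on the same vertex set, and let A ⊆ F be a set of edges such that each a ∈ A joins two different subtours and such that, in the multigraph T ∪̇ 2A, every connected component contains an even number of nodes of U = {nodes of odd F-degree}. Then there exists a U-join J with w(J) ≤ (1/2)·w(T ∪̇ 2A) = (1/2)w(T) + w(A), for any metric weights w. -/

import Mathlib

open scoped Classical

noncomputable def deg {V : Type*} (E : Multiset (Sym2 V)) (v : V) : ℕ :=
  (E.filter (fun e => v ∈ e)).card

def Connects {V : Type*} (E : Multiset (Sym2 V)) : V → V → Prop :=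
  Relation.ReflTransGen (fun a b => s(a, b) ∈ E)

noncomputable def mweight {V : Type*} (w : Sym2 V → ℝ) (E : Multiset (Sym2 V)) : ℝ :=
  (E.map w).sum

def IsMetric {V : Type*} (w : Sym2 V → ℝ) : Prop :=
  (∀ e, 0 ≤ w e) ∧ ∀ a b c : V, w s(a, c) ≤ w s(a, b) + w s(b, c)

def IsTour {V : Type*} (D : Finset V) (T : Multiset (Sym2 V)) : Prop :=
  (∀ e ∈ T, ¬ Sym2.IsDiag e) ∧ (∀ v, Even (deg T v)) ∧ ∀ v, ∃ d ∈ D, Connects T v d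

def IsCSF {V : Type*} (D : Finset V) (F : Finset (Sym2 V)) : Prop :=
  (∀ e ∈ F, ¬ Sym2.IsDiag e) ∧
  (SimpleGraph.fromEdgeSet (↑F : Set (Sym2 V))).IsAcyclic ∧
  ∀ v, ∃ d ∈ D, Connects F.val v d

def IsPM {V : Type*} (U : Finset V) (M : Multiset (Sym2 V)) : Prop :=
  (∀ e ∈ M, ¬ Sym2.IsDiag e) ∧ ∀ v, deg M v = if v ∈ U then 1 else 0

def IsRPPSol {V : Type*} (R J : Multiset (Sym2 V)) : Prop :=
  (∀ e ∈ J, ¬ Sym2.IsDiag e) ∧ (∀ v, Even (deg (R + J) v)) ∧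
  ∀ u v : V, (∃ e ∈ R + J, u ∈ e) → (∃ e ∈ R + J, v ∈ e) → Connects (R + J) u v
namespace Stmt15Aux

variable {V : Type*}

lemma deg_zero (v : V) : deg (0 : Multiset (Sym2 V)) v = 0 := by simp [deg]

lemma deg_add (E F : Multiset (Sym2 V)) (v : V) : deg (E + F) v = deg E v + deg F v := by
  simp [deg, Multiset.filter_add]

lemma deg_cons (e : Sym2 V) (E : Multiset (Sym2 V)) (v : V) :
    deg (e ::ₘ E) v = (if v ∈ e then 1 else 0) + deg E v := by
  by_cases h : v ∈ e <;> simp [deg, Multiset.filter_cons, h] <;> omega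

lemma deg_eq_zero_iff (E : Multiset (Sym2 V)) (v : V) :
    deg E v = 0 ↔ ∀ e ∈ E, v ∉ e := by
  simp [deg, Multiset.card_eq_zero, Multiset.filter_eq_nil]

lemma deg_pos_of_mem {E : Multiset (Sym2 V)} {e : Sym2 V} (he : e ∈ E) {v : V} (hv : v ∈ e) :
    0 < deg E v := by
  rw [deg, Multiset.card_pos]
  have : e ∈ E.filter (fun e => v ∈ e) := Multiset.mem_filter.2 ⟨he, hv⟩
  intro h0
  rw [h0] at this
  simp at this

lemma deg_sub {K E : Multiset (Sym2 V)} (h : K ≤ E) (v : V) :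
    deg (E - K) v = deg E v - deg K v := by
  have : E = E - K + K := (tsub_add_cancel_of_le h).symm
  conv_rhs => rw [this]
  rw [deg_add]; omega

lemma mweight_zero (w : Sym2 V → ℝ) : mweight w (0 : Multiset (Sym2 V)) = 0 := by simp [mweight]

lemma mweight_add (w : Sym2 V → ℝ) (E F : Multiset (Sym2 V)) :
    mweight w (E + F) = mweight w E + mweight w F := by
  simp [mweight]

lemma mweight_cons (w : Sym2 V → ℝ) (e : Sym2 V) (E : Multiset (Sym2 V)) :
    mweight w (e ::ₘ E) = w e + mweight w E := by
  simp [mweight]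

lemma mweight_nonneg {w : Sym2 V → ℝ} (hw : ∀ e, 0 ≤ w e) (E : Multiset (Sym2 V)) :
    0 ≤ mweight w E := by
  rw [mweight]
  refine Multiset.sum_nonneg ?_
  intro x hx
  obtain ⟨e, _, rfl⟩ := Multiset.mem_map.1 hx
  exact hw e

lemma connects_refl (E : Multiset (Sym2 V)) (v : V) : Connects E v v := Relation.ReflTransGen.refl

lemma connects_symm {E : Multiset (Sym2 V)} {u v : V} (h : Connects E u v) : Connects E v u := by
  suffices hs : Std.Symm (fun a b : V => s(a, b) ∈ E) from
    Std.Symm.symm (r := Relation.ReflTransGen (fun a b : V => s(a, b) ∈ E)) _ _ h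
  constructor
  intro a b hab
  rwa [Sym2.eq_swap] at hab

lemma connects_trans {E : Multiset (Sym2 V)} {u v x : V} (h : Connects E u v)
    (h' : Connects E v x) : Connects E u x := Relation.ReflTransGen.trans h h'

lemma connects_single {E : Multiset (Sym2 V)} {u v : V} (h : s(u, v) ∈ E) : Connects E u v :=
  Relation.ReflTransGen.single h

lemma connects_mono {E E' : Multiset (Sym2 V)} (h : E ≤ E') {u v : V} (huv : Connects E u v) :
    Connects E' u v := by
  induction huv with
  | refl => exact connects_refl _ _
  | tail _ hstep ih => exact ih.tail (Multiset.subset_of_le h hstep)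

/-- edges of a walk given by a list of vertices -/
def tE : List V → Multiset (Sym2 V)
  | [] => 0
  | [_] => 0
  | a :: b :: l => s(a, b) ::ₘ tE (b :: l)

@[simp] lemma tE_nil : tE ([] : List V) = 0 := rfl
@[simp] lemma tE_single (a : V) : tE [a] = 0 := rfl
@[simp] lemma tE_cons_cons (a b : V) (l : List V) :
    tE (a :: b :: l) = s(a, b) ::ₘ tE (b :: l) := rfl

lemma mem_list_of_mem_tE : ∀ (l : List V) (e : Sym2 V), e ∈ tE l → ∀ v ∈ e, v ∈ l := by
  intro l
  induction l with
  | nil => simp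
  | cons a l ih =>
    cases l with
    | nil => simp
    | cons b l =>
      intro e he v hv
      rw [tE_cons_cons, Multiset.mem_cons] at he
      rcases he with rfl | he
      · rcases Sym2.mem_iff.1 hv with rfl | rfl
        · exact List.mem_cons_self
        · exact List.mem_cons_of_mem _ (List.mem_cons_self)
      · exact List.mem_cons_of_mem _ (ih e he v hv)

lemma tE_append_cons : ∀ (l₁ : List V) (x : V) (l₂ : List V),
    tE (l₁ ++ x :: l₂) = tE (l₁ ++ [x]) + tE (x :: l₂) := by
  intro l₁
  induction l₁ with
  | nil => simp
  | cons a l ih =>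
    intro x l₂
    cases l with
    | nil => simp
    | cons b l =>
      show tE (a :: b :: (l ++ x :: l₂)) = tE (a :: b :: (l ++ [x])) + tE (x :: l₂)
      rw [tE_cons_cons, tE_cons_cons]
      have ih' := ih x l₂
      simp only [List.cons_append] at ih'
      rw [ih', Multiset.cons_add]

/-- parity of degrees in a walk: a vertex has odd degree iff it is an endpoint on exactly
one side -/
lemma deg_tE_parity : ∀ (l : List V), (∀ e ∈ tE l, ¬ Sym2.IsDiag e) → ∀ v,
    (deg (tE l) v + (if l.head? = some v then 1 else 0) + (if l.getLast? = some v then 1 else 0))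
      % 2 = 0 := by
  intro l
  induction l with
  | nil => intro _ v; simp [deg_zero]
  | cons a l ih =>
    intro hnd v
    cases l with
    | nil =>
      simp only [tE_single, deg_zero, List.head?_cons, List.getLast?_singleton]
      by_cases h : a = v <;> simp [h]
    | cons b l =>
      have hab : a ≠ b := by
        intro h; exact hnd s(a, b) (Multiset.mem_cons_self _ _) (by simp [h])
      have ih' := ih (fun e he => hnd e (Multiset.mem_cons_of_mem he)) v
      rw [tE_cons_cons, deg_cons]
      have hlast : (a :: b :: l).getLast? = (b :: l).getLast? := by
        rw [List.getLast?_cons_cons]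
      rw [hlast]
      rw [List.head?_cons] at ih' ⊢
      rcases eq_or_ne a v with rfl | hva
      · rcases eq_or_ne b a with rfl | hvb
        · exact absurd rfl hab
        · rw [if_pos (Sym2.mem_mk_left a b), if_pos rfl]
          rw [if_neg (by simpa using hvb)] at ih'
          omega
      · rcases eq_or_ne b v with rfl | hvb
        · rw [if_pos (Sym2.mem_mk_right a b), if_neg (by simpa using hva)]
          rw [if_pos rfl] at ih'
          omega
        · rw [if_neg (by simp [Sym2.mem_iff, Ne.symm hva, Ne.symm hvb]),
            if_neg (by simpa using hva)]
          rw [if_neg (by simpa using hvb)] at ih'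
          omega

lemma deg_tE_even {l : List V} (hnd : ∀ e ∈ tE l, ¬ Sym2.IsDiag e)
    (hcl : l.head? = l.getLast?) (v : V) : Even (deg (tE l) v) := by
  have h := deg_tE_parity l hnd v
  rw [hcl] at h
  rw [Nat.even_iff]
  omega

/-- pair up consecutive elements -/
def pairUp : List V → Multiset (Sym2 V)
  | [] => 0
  | [_] => 0
  | a :: b :: l => s(a, b) ::ₘ pairUp l

lemma deg_pairUp : ∀ (l : List V), l.Nodup → Even l.length → ∀ v,
    deg (pairUp l) v = if v ∈ l then 1 else 0 := by
  intro l
  induction l using pairUp.induct with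
  | case1 => intro _ _ v; simp [pairUp, deg_zero]
  | case2 a => intro _ h; simp at h
  | case3 a b l ih =>
    intro hnd hlen v
    have hab : a ≠ b := by simp at hnd; tauto
    have hnd' : l.Nodup := by simp at hnd; exact hnd.2.2
    have hal : a ∉ l := by simp at hnd; tauto
    have hbl : b ∉ l := by simp at hnd; tauto
    have hlen' : Even l.length := by
      rw [Nat.even_iff] at hlen ⊢; simp [List.length_cons] at hlen; omega
    rw [pairUp, deg_cons, ih hnd' hlen' v]
    rcases eq_or_ne v a with rfl | hva
    · simp [Sym2.mem_iff, hal]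
    · rcases eq_or_ne v b with rfl | hvb
      · simp [Sym2.mem_iff, hbl]
      · simp [Sym2.mem_iff, hva, hvb]

lemma pairUp_rotate : ∀ (l : List V) (a z : V), Odd l.length →
    pairUp (a :: l) + pairUp (l ++ [z]) = tE (a :: l ++ [z]) := by
  intro l
  induction l using pairUp.induct with
  | case1 => intro a z h; simp at h
  | case2 b => intro a z _; simp [pairUp, tE]
  | case3 b c l ih =>
    intro a z hlen
    have hlen' : Odd l.length := by
      rw [Nat.odd_iff] at hlen ⊢; simp [List.length_cons] at hlen; omega
    show pairUp (a :: b :: c :: l) + pairUp ((b :: c :: l) ++ [z]) = _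
    rw [show pairUp (a :: b :: c :: l) = s(a, b) ::ₘ pairUp (c :: l) from rfl]
    rw [show (b :: c :: l) ++ [z] = b :: c :: (l ++ [z]) from rfl]
    rw [show pairUp (b :: c :: (l ++ [z])) = s(b, c) ::ₘ pairUp (l ++ [z]) from rfl]
    have h := ih c z hlen'
    simp only [List.cons_append] at h
    rw [show tE (a :: (b :: c :: l) ++ [z]) = s(a, b) ::ₘ s(b, c) ::ₘ tE (c :: (l ++ [z])) from
      rfl, ← h]
    simp only [Multiset.cons_add, Multiset.add_cons, Multiset.cons_swap]

section Weight
variable {w : Sym2 V → ℝ}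

lemma mweight_tE_cons_cons (a b : V) (l : List V) :
    mweight w (tE (a :: b :: l)) = w s(a, b) + mweight w (tE (b :: l)) := by
  rw [tE_cons_cons, mweight_cons]

lemma key_shortcut (hw : IsMetric w) : ∀ (L : List V) (a b : V),
    w s(a, b) ≤ mweight w (tE (a :: (L ++ [b]))) := by
  intro L
  induction L with
  | nil => simp [tE, mweight]
  | cons c L ih =>
    intro a b
    calc w s(a, b) ≤ w s(a, c) + w s(c, b) := hw.2 a c b
    _ ≤ w s(a, c) + mweight w (tE (c :: (L ++ [b]))) := by linarith [ih c b]
    _ = mweight w (tE (a :: c :: (L ++ [b]))) := (mweight_tE_cons_cons _ _ _).symm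

lemma first_edge (hw : IsMetric w) (L : List V) (a c z : V) :
    mweight w (tE (a :: (L ++ [z]))) ≤ w s(a, c) + mweight w (tE (c :: (L ++ [z]))) := by
  cases L with
  | nil => simpa [tE, mweight] using hw.2 a c z
  | cons d L =>
    simp only [List.cons_append, mweight_tE_cons_cons]
    have := hw.2 a c d
    linarith

lemma shortcut (hw : IsMetric w) : ∀ {M L : List V}, M.Sublist L → ∀ a z,
    mweight w (tE (a :: (M ++ [z]))) ≤ mweight w (tE (a :: (L ++ [z]))) := by
  intro M L h
  induction h with
  | slnil => intro a z; exact le_refl _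
  | cons c h ih =>
    intro a z
    calc mweight w (tE (a :: (_ ++ [z]))) ≤ mweight w (tE (a :: (_ ++ [z]))) := ih a z
    _ ≤ w s(a, c) + mweight w (tE (c :: (_ ++ [z]))) := first_edge hw _ a c z
    _ = mweight w (tE (a :: ((c :: _) ++ [z]))) := by
        simp only [List.cons_append, mweight_tE_cons_cons]
  | cons_cons c h ih =>
    intro a z
    simp only [List.cons_append, mweight_tE_cons_cons]
    linarith [ih c z]

lemma last_edge (hw : IsMetric w) : ∀ (M : List V), M ≠ [] → ∀ z z',
    mweight w (tE (M ++ [z'])) ≤ mweight w (tE (M ++ [z])) + w s(z, z') := by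
  intro M
  induction M with
  | nil => intro h; exact absurd rfl h
  | cons m M ih =>
    intro _ z z'
    cases M with
    | nil => simpa [tE, mweight] using hw.2 m z z'
    | cons d M' =>
      simp only [List.cons_append, mweight_tE_cons_cons] at *
      have := ih (by simp) z z'
      linarith

end Weight

lemma exists_edge_of_deg_pos {E : Multiset (Sym2 V)} {b : V} (h : 0 < deg E b) :
    ∃ c, s(b, c) ∈ E := by
  rw [deg, Multiset.card_pos] at h
  obtain ⟨e, he⟩ := Multiset.exists_mem_of_ne_zero h
  have he' := Multiset.mem_filter.1 he
  obtain ⟨y, rfl⟩ := Sym2.mem_iff_exists.1 he'.2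
  exact ⟨y, he'.1⟩

lemma step_conn {E : Multiset (Sym2 V)} {e : Sym2 V} (he : e ∈ E) {u v : V}
    (hu : u ∈ e) (hv : v ∈ e) : Connects E u v := by
  rcases eq_or_ne u v with rfl | huv
  · exact connects_refl _ _
  · exact connects_single (by rwa [← Sym2.mem_and_mem_iff huv |>.1 ⟨hu, hv⟩] )

lemma trailBack : ∀ (E : Multiset (Sym2 V)), (∀ e ∈ E, ¬ Sym2.IsDiag e) →
    ∀ b a, Odd (deg E b) → (∀ v, v ≠ a → v ≠ b → Even (deg E v)) →
    ∃ l : List V, tE (b :: (l ++ [a])) ≤ E := by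
  intro E
  induction E using Multiset.strongInductionOn with
  | ih E ih =>
    intro hnd b a hob heven
    have hpos : 0 < deg E b := by
      rcases Nat.eq_zero_or_pos (deg E b) with h | h
      · rw [h] at hob; simp at hob
      · exact h
    obtain ⟨c, hc⟩ := exists_edge_of_deg_pos hpos
    have hbc : b ≠ c := fun h => hnd _ hc (by simp [h])
    rcases eq_or_ne c a with rfl | hca
    · exact ⟨[], by
        show tE [b, c] ≤ E
        rw [show tE [b, c] = {s(b, c)} from rfl]
        exact Multiset.singleton_le.2 hc⟩
    · set E' := E.erase s(b, c) with hE'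
      have hcons : s(b, c) ::ₘ E' = E := Multiset.cons_erase hc
      have hlt : E' < E := Multiset.erase_lt.2 hc
      have hdeg : ∀ v, deg E v = (if v ∈ s(b, c) then 1 else 0) + deg E' v := by
        intro v; rw [← hcons, deg_cons]
      have hoc : Odd (deg E' c) := by
        have h1 := heven c hca (Ne.symm hbc)
        have h2 := hdeg c
        rw [if_pos (Sym2.mem_mk_right _ _)] at h2
        rw [Nat.even_iff] at h1; rw [Nat.odd_iff]; omega
      have heven' : ∀ v, v ≠ a → v ≠ c → Even (deg E' v) := by
        intro v hva hvc
        rcases eq_or_ne v b with rfl | hvb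
        · have h2 := hdeg v
          rw [if_pos (Sym2.mem_mk_left _ _)] at h2
          rw [Nat.odd_iff] at hob; rw [Nat.even_iff]; omega
        · have h2 := hdeg v
          rw [if_neg (by simp [Sym2.mem_iff, hvb, hvc])] at h2
          have := heven v hva hvb
          rw [Nat.even_iff] at *; omega
      obtain ⟨l', hl'⟩ := ih E' hlt (fun e he => hnd e (Multiset.mem_of_le (le_of_lt hlt) he))
        c a hoc heven'
      refine ⟨c :: l', ?_⟩
      show s(b, c) ::ₘ tE (c :: (l' ++ [a])) ≤ E
      rw [← hcons]
      exact Multiset.cons_le_cons _ hl'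

lemma extract_closed {E : Multiset (Sym2 V)} (hnd : ∀ e ∈ E, ¬ Sym2.IsDiag e)
    (heven : ∀ v, Even (deg E v)) {a : V} (ha : 0 < deg E a) :
    ∃ l : List V, tE (a :: (l ++ [a])) ≤ E ∧ tE (a :: (l ++ [a])) ≠ 0 := by
  obtain ⟨c, hc⟩ := exists_edge_of_deg_pos ha
  have hac : a ≠ c := fun h => hnd _ hc (by simp [h])
  set E' := E.erase s(a, c) with hE'
  have hcons : s(a, c) ::ₘ E' = E := Multiset.cons_erase hc
  have hdeg : ∀ v, deg E v = (if v ∈ s(a, c) then 1 else 0) + deg E' v := by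
    intro v; rw [← hcons, deg_cons]
  have hoc : Odd (deg E' c) := by
    have h1 := heven c
    have h2 := hdeg c
    rw [if_pos (Sym2.mem_mk_right _ _)] at h2
    rw [Nat.even_iff] at h1; rw [Nat.odd_iff]; omega
  have heven' : ∀ v, v ≠ a → v ≠ c → Even (deg E' v) := by
    intro v hva hvc
    have h2 := hdeg v
    rw [if_neg (by simp [Sym2.mem_iff, hva, hvc])] at h2
    have := heven v
    rw [Nat.even_iff] at *; omega
  have hnd' : ∀ e ∈ E', ¬ Sym2.IsDiag e := fun e he =>
    hnd e (Multiset.mem_of_le (Multiset.erase_le _ _) he)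
  obtain ⟨l', hl'⟩ := trailBack E' hnd' c a hoc heven'
  refine ⟨c :: l', ?_, ?_⟩
  · show s(a, c) ::ₘ tE (c :: (l' ++ [a])) ≤ E
    rw [← hcons]
    exact Multiset.cons_le_cons _ hl'
  · show s(a, c) ::ₘ tE (c :: (l' ++ [a])) ≠ 0
    simp

/-- edges of the connected component of `x` -/
noncomputable def compE (E : Multiset (Sym2 V)) (x : V) : Multiset (Sym2 V) :=
  E.filter (fun e => ∃ p ∈ e, Connects E x p)

/-- the other edges -/
noncomputable def restE (E : Multiset (Sym2 V)) (x : V) : Multiset (Sym2 V) :=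
  E.filter (fun e => ¬ ∃ p ∈ e, Connects E x p)

lemma compE_add_restE (E : Multiset (Sym2 V)) (x : V) : compE E x + restE E x = E :=
  Multiset.filter_add_not _ _

lemma compE_le (E : Multiset (Sym2 V)) (x : V) : compE E x ≤ E := Multiset.filter_le _ _
lemma restE_le (E : Multiset (Sym2 V)) (x : V) : restE E x ≤ E := Multiset.filter_le _ _

lemma mem_compE {E : Multiset (Sym2 V)} {x : V} {e : Sym2 V} :
    e ∈ compE E x ↔ e ∈ E ∧ ∃ p ∈ e, Connects E x p := Multiset.mem_filter

lemma mem_restE {E : Multiset (Sym2 V)} {x : V} {e : Sym2 V} :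
    e ∈ restE E x ↔ e ∈ E ∧ ¬ ∃ p ∈ e, Connects E x p := Multiset.mem_filter

lemma conn_of_mem_compE {E : Multiset (Sym2 V)} {x : V} {e : Sym2 V} (he : e ∈ compE E x)
    {v : V} (hv : v ∈ e) : Connects E x v := by
  obtain ⟨heE, p, hp, hxp⟩ := mem_compE.1 he
  exact connects_trans hxp (step_conn heE hp hv)

lemma deg_compE_of_conn {E : Multiset (Sym2 V)} {x v : V} (h : Connects E x v) :
    deg (compE E x) v = deg E v := by
  rw [deg, deg, compE, Multiset.filter_filter]
  congr 1
  apply Multiset.filter_congr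
  intro e he
  constructor
  · rintro ⟨hv, _⟩; exact hv
  · intro hv; exact ⟨hv, v, hv, h⟩

lemma deg_compE_of_not_conn {E : Multiset (Sym2 V)} {x v : V} (h : ¬ Connects E x v) :
    deg (compE E x) v = 0 := by
  rw [deg_eq_zero_iff]
  intro e he hv
  exact h (conn_of_mem_compE he hv)

lemma deg_restE_of_conn {E : Multiset (Sym2 V)} {x v : V} (h : Connects E x v) :
    deg (restE E x) v = 0 := by
  rw [deg_eq_zero_iff]
  intro e he hv
  obtain ⟨heE, hne⟩ := mem_restE.1 he
  exact hne ⟨v, hv, h⟩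

lemma deg_restE_of_not_conn {E : Multiset (Sym2 V)} {x v : V} (h : ¬ Connects E x v) :
    deg (restE E x) v = deg E v := by
  have h1 : deg (compE E x) v + deg (restE E x) v = deg E v := by
    rw [← deg_add, compE_add_restE]
  rw [deg_compE_of_not_conn h] at h1
  omega

lemma conn_compE {E : Multiset (Sym2 V)} {x v : V} (h : Connects E x v) :
    Connects (compE E x) x v := by
  induction h with
  | refl => exact connects_refl _ _
  | @tail b c hab hbc ih =>
    refine ih.tail ?_
    exact Multiset.mem_filter.2 ⟨hbc, b, Sym2.mem_mk_left _ _, hab⟩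

lemma conn_restE {E : Multiset (Sym2 V)} {x v u : V} (hvx : ¬ Connects E x v)
    (h : Connects E v u) : Connects (restE E x) v u := by
  induction h with
  | refl => exact connects_refl _ _
  | @tail b c hab hbc ih =>
    refine ih.tail ?_
    refine mem_restE.2 ⟨hbc, ?_⟩
    rintro ⟨p, hp, hxp⟩
    have hpb : Connects E p b := step_conn hbc hp (Sym2.mem_mk_left _ _)
    have : Connects E x v := by
      refine connects_trans (connects_trans hxp hpb) ?_
      exact connects_symm (connects_mono (le_refl E) hab)
    exact hvx this

lemma conn_of_deg_pos_trail {E : Multiset (Sym2 V)} {v : V} (h : 0 < deg E v) :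
    ∃ e ∈ E, v ∈ e := by
  obtain ⟨c, hc⟩ := exists_edge_of_deg_pos h
  exact ⟨s(v, c), hc, Sym2.mem_mk_left _ _⟩

lemma deg_mono {E E' : Multiset (Sym2 V)} (h : E ≤ E') (v : V) : deg E v ≤ deg E' v :=
  Multiset.card_le_card (Multiset.filter_le_filter _ h)

lemma splice {N : ℕ}
    (euler_ih : ∀ R : Multiset (Sym2 V), Multiset.card R < N →
      (∀ e ∈ R, ¬ Sym2.IsDiag e) → (∀ v, Even (deg R v)) →
      ∀ x, (∀ v, 0 < deg R v → Connects R x v) →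
      ∃ L : List V, L.head? = some x ∧ L.getLast? = some x ∧ tE L = R) :
    ∀ (xs : List V) (R : Multiset (Sym2 V)), xs ≠ [] → Multiset.card R < N →
    (∀ e ∈ R, ¬ Sym2.IsDiag e) → (∀ v, Even (deg R v)) →
    (∀ v, 0 < deg R v → ∃ y ∈ xs, Connects R y v) →
    ∃ L : List V, L.head? = xs.head? ∧ L.getLast? = xs.getLast? ∧ tE L = tE xs + R := by
  intro xs
  induction xs with
  | nil => intro R h; exact absurd rfl h
  | cons x xs ih =>
    intro R _ hcard hnd heven hinv
    cases xs with
    | nil =>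
      have hconn : ∀ v, 0 < deg R v → Connects R x v := by
        intro v hv
        obtain ⟨y, hy, hc⟩ := hinv v hv
        simp only [List.mem_singleton] at hy
        subst hy; exact hc
      obtain ⟨L, h1, h2, h3⟩ := euler_ih R hcard hnd heven x hconn
      exact ⟨L, by simpa using h1, by simpa using h2, by simpa using h3⟩
    | cons y rest =>
      set K := compE R x with hK
      set R' := restE R x with hR'
      have hKR : K + R' = R := compE_add_restE R x
      have hKnd : ∀ e ∈ K, ¬ Sym2.IsDiag e := fun e he => hnd e (Multiset.mem_of_le (compE_le R x) he)
      have hR'nd : ∀ e ∈ R', ¬ Sym2.IsDiag e := fun e he => hnd e (Multiset.mem_of_le (restE_le R x) he)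
      have hKeven : ∀ v, Even (deg K v) := by
        intro v
        by_cases h : Connects R x v
        · rw [deg_compE_of_conn h]; exact heven v
        · rw [deg_compE_of_not_conn h]; exact Even.zero
      have hR'even : ∀ v, Even (deg R' v) := by
        intro v
        by_cases h : Connects R x v
        · rw [deg_restE_of_conn h]; exact Even.zero
        · rw [deg_restE_of_not_conn h]; exact heven v
      have hKconn : ∀ v, 0 < deg K v → Connects K x v := by
        intro v hv
        obtain ⟨e, he, hve⟩ := conn_of_deg_pos_trail hv
        exact conn_compE (conn_of_mem_compE he hve)
      obtain ⟨L0, hL0h, hL0l, hL0e⟩ := euler_ih K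
        (lt_of_le_of_lt (Multiset.card_le_card (compE_le R x)) hcard) hKnd hKeven x hKconn
      have hinv' : ∀ v, 0 < deg R' v → ∃ y' ∈ y :: rest, Connects R' y' v := by
        intro v hv
        have hvx : ¬ Connects R x v := by
          intro h
          rw [deg_restE_of_conn h] at hv; simp at hv
        obtain ⟨y', hy', hc⟩ := hinv v (lt_of_lt_of_le hv (deg_mono (restE_le R x) v))
        rcases List.mem_cons.1 hy' with rfl | hy'
        · exact absurd hc hvx
        · refine ⟨y', hy', ?_⟩
          have := conn_restE hvx (connects_symm hc)
          exact connects_symm this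
      obtain ⟨L1, hL1h, hL1l, hL1e⟩ := ih R' (List.cons_ne_nil _ _)
        (lt_of_le_of_lt (Multiset.card_le_card (restE_le R x)) hcard) hR'nd hR'even hinv'
      -- L0 nonempty ends with x, L1 nonempty starts with y
      have hL0ne : L0 ≠ [] := by intro h; rw [h] at hL0h; simp at hL0h
      have hL1ne : L1 ≠ [] := by intro h; rw [h] at hL1h; simp [List.head?_cons] at hL1h
      obtain ⟨L1', rfl⟩ : ∃ t, L1 = y :: t := by
        cases L1 with
        | nil => exact absurd rfl hL1ne
        | cons a t =>
          simp only [List.head?_cons] at hL1h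
          exact ⟨t, by rw [(Option.some_inj.1 hL1h.symm)]⟩
      have hL0split : L0.dropLast ++ [x] = L0 := by
        have := List.dropLast_append_getLast? x (by rw [hL0l]; rfl)
        exact this
      refine ⟨L0 ++ y :: L1', ?_, ?_, ?_⟩
      · rw [List.head?_append_of_ne_nil _ hL0ne, hL0h, List.head?_cons]
      · rw [List.getLast?_append_of_ne_nil _ (List.cons_ne_nil _ _), hL1l,
          List.getLast?_cons_cons]
      · have e1 : tE (L0 ++ y :: L1') = tE (L0 ++ [y]) + tE (y :: L1') := tE_append_cons _ _ _
        have e2 : tE (L0 ++ [y]) = tE L0 + {s(x, y)} := by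
          conv_lhs => rw [← hL0split]
          rw [show L0.dropLast ++ [x] ++ [y] = L0.dropLast ++ x :: [y] by simp]
          rw [tE_append_cons _ x [y], hL0split]
          rfl
        rw [e1, e2, hL0e, hL1e]
        rw [show tE (x :: y :: rest) = s(x, y) ::ₘ tE (y :: rest) from rfl]
        rw [← hKR]
        rw [← Multiset.singleton_add]
        simp only [add_comm, add_left_comm, add_assoc]

lemma euler : ∀ (n : ℕ) (E : Multiset (Sym2 V)), Multiset.card E < n →
    (∀ e ∈ E, ¬ Sym2.IsDiag e) → (∀ v, Even (deg E v)) →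
    ∀ a, (∀ v, 0 < deg E v → Connects E a v) →
    ∃ L : List V, L.head? = some a ∧ L.getLast? = some a ∧ tE L = E := by
  intro n
  induction n using Nat.strong_induction_on with
  | _ n ih =>
    intro E hcard hnd heven a hconn
    rcases eq_or_ne E 0 with rfl | hE0
    · exact ⟨[a], rfl, rfl, rfl⟩
    · -- a has positive degree
      obtain ⟨e, he⟩ := Multiset.exists_mem_of_ne_zero hE0
      have hv0 : 0 < deg E e.out.1 := deg_pos_of_mem he (Sym2.out_fst_mem e)
      have ha : 0 < deg E a := by
        rcases (Relation.ReflTransGen.cases_head (hconn e.out.1 hv0)) with h | ⟨c, hc, _⟩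
        · rwa [← h] at hv0
        · exact deg_pos_of_mem hc (Sym2.mem_mk_left _ _)
      obtain ⟨l, hCle, hC0⟩ := extract_closed hnd heven ha
      set Lc : List V := a :: (l ++ [a]) with hLc
      set C : Multiset (Sym2 V) := tE Lc with hC
      set E2 : Multiset (Sym2 V) := E - C with hE2
      have hE2C : E2 + C = E := tsub_add_cancel_of_le hCle
      have hcardE2 : Multiset.card E2 < Multiset.card E := by
        have h1 : Multiset.card E2 + Multiset.card C = Multiset.card E := by
          rw [← Multiset.card_add, hE2C]
        have h2 : 0 < Multiset.card C := Multiset.card_pos.2 hC0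
        omega
      have hCnd : ∀ e' ∈ C, ¬ Sym2.IsDiag e' := fun e' he' => hnd e' (Multiset.mem_of_le hCle he')
      have hLclast : Lc.getLast? = some a := by
        rw [hLc, show a :: (l ++ [a]) = [a] ++ (l ++ [a]) from rfl,
          List.getLast?_append_of_ne_nil _ (by simp),
          List.getLast?_append_of_ne_nil _ (by simp)]
        rfl
      have hCeven : ∀ v, Even (deg C v) := by
        intro v
        exact deg_tE_even hCnd (by rw [hLclast]; rfl) v
      have hE2nd : ∀ e' ∈ E2, ¬ Sym2.IsDiag e' :=
        fun e' he' => hnd e' (Multiset.mem_of_le (tsub_le_self) he')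
      have hE2even : ∀ v, Even (deg E2 v) := by
        intro v
        have h1 : deg E2 v + deg C v = deg E v := by rw [← deg_add, hE2C]
        have h2 := heven v
        have h3 := hCeven v
        rw [Nat.even_iff] at *
        omega
      have hinv : ∀ v, 0 < deg E2 v → ∃ y ∈ Lc, Connects E2 y v := by
        intro v hv
        by_contra hno
        push_neg at hno
        have key : ∀ u, Connects E v u → Connects E2 v u := by
          intro u h
          induction h with
          | refl => exact connects_refl _ _
          | @tail b c hvb hbc ihc =>
            rcases Multiset.mem_add.1 (by rw [hE2C]; exact hbc : s(b, c) ∈ E2 + C)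
              with h2 | h2
            · exact ihc.tail h2
            · exact absurd (connects_symm ihc)
                (hno b (mem_list_of_mem_tE Lc _ h2 b (Sym2.mem_mk_left _ _)))
        have hvE : 0 < deg E v := lt_of_lt_of_le hv (deg_mono tsub_le_self v)
        have h1 : Connects E2 v a := key a (connects_symm (hconn v hvE))
        exact hno a (by rw [hLc]; exact List.mem_cons_self) (connects_symm h1)
      obtain ⟨L, h1, h2, h3⟩ := splice (fun R hR => ih (Multiset.card E) hcard R hR)
        Lc E2 (by simp [hLc]) hcardE2 hE2nd hE2even hinv
      refine ⟨L, ?_, ?_, ?_⟩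
      · rw [h1, hLc]; rfl
      · rw [h2, hLclast]
      · rw [h3, ← hC, add_comm, hE2C]

lemma conn_eq_of_deg_zero {E : Multiset (Sym2 V)} {v : V} (h : deg E v = 0) {u : V}
    (hc : Connects E v u) : v = u := by
  rcases Relation.ReflTransGen.cases_head hc with h' | ⟨c, hc', _⟩
  · exact h'
  · exact absurd (deg_pos_of_mem hc' (Sym2.mem_mk_left _ _)) (by omega)

lemma filter_conn_of_deg_zero {E : Multiset (Sym2 V)} {v : V} (h : deg E v = 0)
    (U : Finset V) (hvU : v ∈ U) :
    (U.filter (fun u => Connects E v u)) = {v} := by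
  refine Finset.eq_singleton_iff_unique_mem.2 ⟨Finset.mem_filter.2 ⟨hvU, connects_refl _ _⟩, ?_⟩
  intro u hu
  exact (conn_eq_of_deg_zero h (Finset.mem_filter.1 hu).2).symm

lemma main_lemma (w : Sym2 V → ℝ) (hw : IsMetric w) :
    ∀ (n : ℕ) (E : Multiset (Sym2 V)), Multiset.card E < n →
    (∀ e ∈ E, ¬ Sym2.IsDiag e) → (∀ v, Even (deg E v)) →
    ∀ U : Finset V, (∀ v, Even ((U.filter (fun u => Connects E v u)).card)) →
    ∃ J : Multiset (Sym2 V), (∀ v, Odd (deg J v) ↔ v ∈ U) ∧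
      2 * mweight w J ≤ mweight w E := by
  intro n
  induction n using Nat.strong_induction_on with
  | _ n ih =>
    intro E hcard hnd heven U hp
    rcases eq_or_ne E 0 with rfl | hE0
    · refine ⟨0, ?_, by rw [mweight_zero]; norm_num⟩
      intro v
      simp only [deg_zero]
      constructor
      · intro h; simp at h
      · intro hvU
        exfalso
        have h0 : deg (0 : Multiset (Sym2 V)) v = 0 := deg_zero v
        have := hp v
        rw [filter_conn_of_deg_zero h0 U hvU] at this
        simp at this
    · obtain ⟨e, he⟩ := Multiset.exists_mem_of_ne_zero hE0
      set x := e.out.1 with hxdef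
      have hx : x ∈ e := Sym2.out_fst_mem e
      set K := compE E x with hKdef
      set R := restE E x with hRdef
      have hKR : K + R = E := compE_add_restE E x
      have hKne : K ≠ 0 := by
        intro h0
        have : e ∈ K := mem_compE.2 ⟨he, x, hx, connects_refl _ _⟩
        rw [h0] at this; simp at this
      have hcardR : Multiset.card R < Multiset.card E := by
        have h1 : Multiset.card K + Multiset.card R = Multiset.card E := by
          rw [← Multiset.card_add, hKR]
        have h2 : 0 < Multiset.card K := Multiset.card_pos.2 hKne
        omega
      have hKnd : ∀ e' ∈ K, ¬ Sym2.IsDiag e' :=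
        fun e' he' => hnd e' (Multiset.mem_of_le (compE_le E x) he')
      have hRnd : ∀ e' ∈ R, ¬ Sym2.IsDiag e' :=
        fun e' he' => hnd e' (Multiset.mem_of_le (restE_le E x) he')
      have hKeven : ∀ v, Even (deg K v) := by
        intro v
        by_cases h : Connects E x v
        · rw [hKdef, deg_compE_of_conn h]; exact heven v
        · rw [hKdef, deg_compE_of_not_conn h]; exact Even.zero
      have hReven : ∀ v, Even (deg R v) := by
        intro v
        by_cases h : Connects E x v
        · rw [hRdef, deg_restE_of_conn h]; exact Even.zero
        · rw [hRdef, deg_restE_of_not_conn h]; exact heven v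
      set U' := U.filter (fun u => ¬ Connects E x u) with hU'def
      set UK := U.filter (fun u => Connects E x u) with hUKdef
      have hUKeven : Even UK.card := hp x
      -- recursion on the rest
      have hp' : ∀ v, Even ((U'.filter (fun u => Connects R v u)).card) := by
        intro v
        by_cases hvx : Connects E x v
        · have : U'.filter (fun u => Connects R v u) = ∅ := by
            refine Finset.eq_empty_iff_forall_notMem.2 ?_
            intro u hu
            obtain ⟨hu1, hu2⟩ := Finset.mem_filter.1 hu
            obtain ⟨_, hnxu⟩ := Finset.mem_filter.1 hu1
            have hdeg0 : deg R v = 0 := by rw [hRdef]; exact deg_restE_of_conn hvx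
            have := conn_eq_of_deg_zero hdeg0 hu2
            exact hnxu (this ▸ hvx)
          rw [this]; simp
        · have heq : U'.filter (fun u => Connects R v u) = U.filter (fun u => Connects E v u) := by
            ext u
            simp only [Finset.mem_filter, hU'def]
            constructor
            · rintro ⟨⟨hu1, hu2⟩, hu3⟩
              exact ⟨hu1, connects_mono (restE_le E x) hu3⟩
            · rintro ⟨hu1, hu2⟩
              refine ⟨⟨hu1, fun hxu => hvx (connects_trans hxu (connects_symm hu2))⟩, ?_⟩
              exact conn_restE hvx hu2
          rw [heq]; exact hp v
      obtain ⟨J', hJ'par, hJ'w⟩ := ih (Multiset.card E) hcard R hcardR hRnd hReven U' hp'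
      -- the component part
      have hJK : ∃ JK : Multiset (Sym2 V), (∀ v, Odd (deg JK v) ↔ v ∈ UK) ∧
          2 * mweight w JK ≤ mweight w K := by
        rcases eq_or_ne UK ∅ with hUK0 | hUKne
        · refine ⟨0, ?_, ?_⟩
          · intro v; simp [deg_zero, hUK0]
          · rw [mweight_zero]
            have := mweight_nonneg hw.1 K
            linarith
        · -- UK nonempty, even cardinality hence ≥ 2
          have hUKcard : 2 ≤ UK.card := by
            have h1 : 0 < UK.card := Finset.card_pos.2 (Finset.nonempty_iff_ne_empty.2 hUKne)
            rcases hUKeven with ⟨k, hk⟩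
            omega
          have hUdeg : ∀ u ∈ UK, 0 < deg E u := by
            intro u hu
            by_contra h0
            have h0' : deg E u = 0 := by omega
            have huU : u ∈ U := (Finset.mem_filter.1 hu).1
            have := hp u
            rw [filter_conn_of_deg_zero h0' U huU] at this
            simp at this
          have hKconn : ∀ v, 0 < deg K v → Connects K x v := by
            intro v hv
            obtain ⟨e', he', hve'⟩ := conn_of_deg_pos_trail hv
            exact conn_compE (conn_of_mem_compE he' hve')
          obtain ⟨L, hLh, hLl, hLe⟩ := euler (Multiset.card K + 1) K (lt_add_one _)
            hKnd hKeven x hKconn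
          obtain ⟨L', rfl⟩ : ∃ t, L = x :: t := by
            cases L with
            | nil => simp at hLh
            | cons a t =>
              simp only [List.head?_cons] at hLh
              exact ⟨t, by rw [Option.some_inj.1 hLh.symm]⟩
          have hL'ne : L' ≠ [] := by
            intro h0
            rw [h0] at hLe
            exact hKne (by rw [← hLe]; rfl)
          have hL'last : L'.getLast? = some x := by
            rw [show x :: L' = [x] ++ L' from rfl, List.getLast?_append_of_ne_nil _ hL'ne] at hLl
            exact hLl
          set mid := L'.dropLast with hmiddef
          have hmid : mid ++ [x] = L' := List.dropLast_append_getLast? x hL'last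
          have hmem_mid : ∀ u ∈ UK, u ≠ x → u ∈ mid := by
            intro u hu hux
            have hconn_xu : Connects E x u := (Finset.mem_filter.1 hu).2
            have hdegK : 0 < deg K u := by
              rw [hKdef, deg_compE_of_conn hconn_xu]
              exact hUdeg u hu
            obtain ⟨e', he', hue'⟩ := conn_of_deg_pos_trail hdegK
            have : u ∈ x :: L' := mem_list_of_mem_tE _ e' (by rwa [hLe]) u hue'
            rcases List.mem_cons.1 this with rfl | h2
            · exact absurd rfl hux
            · rw [← hmid] at h2
              rcases List.mem_append.1 h2 with h3 | h3
              · exact h3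
              · simp at h3; exact absurd h3 hux
          set M := mid.dedup.filter (fun v => decide (v ∈ UK ∧ v ≠ x)) with hMdef
          have hMsub : M.Sublist mid := (List.filter_sublist).trans mid.dedup_sublist
          have hMnodup : M.Nodup := mid.nodup_dedup.filter _
          have hMmem : ∀ u, u ∈ M ↔ u ∈ UK ∧ u ≠ x := by
            intro u
            rw [hMdef, List.mem_filter]
            simp only [decide_eq_true_eq, List.mem_dedup]
            constructor
            · rintro ⟨_, h⟩; exact h
            · rintro ⟨h1, h2⟩; exact ⟨hmem_mid u h1 h2, h1, h2⟩
          have hxM : x ∉ M := by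
            intro h; exact ((hMmem x).1 h).2 rfl
          -- produce the cyclic list
          have hus : ∃ (u₁ : V) (rest : List V), (u₁ :: rest).Nodup ∧
              (∀ u, u ∈ u₁ :: rest ↔ u ∈ UK) ∧
              mweight w (tE (u₁ :: (rest ++ [u₁]))) ≤ mweight w K := by
            have hwK : mweight w K = mweight w (tE (x :: (mid ++ [x]))) := by
              rw [← hLe, hmid]
            by_cases hxUK : x ∈ UK
            · -- M nonempty since |UK| ≥ 2
              obtain ⟨u₀, hu₀UK, hu₀x⟩ := Finset.exists_mem_ne (s := UK) (by omega) x
              have hu₀M : u₀ ∈ M := (hMmem u₀).2 ⟨hu₀UK, hu₀x⟩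
              obtain ⟨u₁, M', hMeq⟩ := List.exists_cons_of_ne_nil (List.ne_nil_of_mem hu₀M)
              rw [hMeq] at hMsub hMnodup hMmem hxM
              refine ⟨u₁, M' ++ [x], ?_, ?_, ?_⟩
              · have : (u₁ :: M' ++ [x]).Nodup := by
                  rw [show u₁ :: M' ++ [x] = (u₁ :: M') ++ [x] from rfl]
                  rw [List.nodup_append]
                  refine ⟨hMnodup, List.nodup_singleton x, ?_⟩
                  intro a ha b hax hab
                  simp only [List.mem_singleton] at hax
                  subst hax
                  subst hab
                  exact hxM ha
                simpa using this
              · intro u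
                constructor
                · intro hu
                  rcases List.mem_cons.1 hu with rfl | hu
                  · exact (((hMmem u).1 (List.mem_cons_self))).1
                  · rcases List.mem_append.1 hu with hu | hu
                    · exact ((hMmem u).1 (List.mem_cons_of_mem _ hu)).1
                    · simp only [List.mem_singleton] at hu; subst hu; exact hxUK
                · intro hu
                  rcases eq_or_ne u x with rfl | hux
                  · exact List.mem_cons_of_mem _ (List.mem_append_right _ (by simp))
                  · have := (hMmem u).2 ⟨hu, hux⟩
                    rcases List.mem_cons.1 this with rfl | h2
                    · exact List.mem_cons_self
                    · exact List.mem_cons_of_mem _ (List.mem_append_left _ h2)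
              · -- weight bound
                have hshort := shortcut hw hMsub x x
                have e1 : mweight w (tE (x :: ((u₁ :: M') ++ [x]))) =
                    w s(x, u₁) + mweight w (tE (u₁ :: (M' ++ [x]))) := by
                  rw [show x :: ((u₁ :: M') ++ [x]) = x :: u₁ :: (M' ++ [x]) from rfl]
                  exact mweight_tE_cons_cons _ _ _
                have e2 : mweight w (tE (u₁ :: ((M' ++ [x]) ++ [u₁]))) =
                    mweight w (tE (u₁ :: (M' ++ [x]))) + w s(x, u₁) := by
                  rw [show u₁ :: ((M' ++ [x]) ++ [u₁]) = (u₁ :: M') ++ (x :: [u₁]) by simp]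
                  rw [tE_append_cons]
                  rw [mweight_add]
                  rw [show (u₁ :: M') ++ [x] = u₁ :: (M' ++ [x]) from rfl]
                  rw [show tE [x, u₁] = {s(x, u₁)} from rfl]
                  simp [mweight]
                rw [e2, hwK]
                rw [e1] at hshort
                linarith
            · -- x ∉ UK; here M itself lists UK
              have hMne : M ≠ [] := by
                obtain ⟨u₀, hu₀⟩ := Finset.nonempty_iff_ne_empty.2 hUKne
                have : u₀ ∈ M := (hMmem u₀).2 ⟨hu₀, fun h => hxUK (h ▸ hu₀)⟩
                intro h0; rw [h0] at this; simp at this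
              obtain ⟨u₁, M', hMeq⟩ := List.exists_cons_of_ne_nil hMne
              rw [hMeq] at hMsub hMnodup hMmem hxM
              refine ⟨u₁, M', hMnodup, ?_, ?_⟩
              · intro u
                rw [hMmem u]
                constructor
                · rintro ⟨h1, _⟩; exact h1
                · intro h1; exact ⟨h1, fun h => hxUK (h ▸ h1)⟩
              · have hle := last_edge hw (u₁ :: M') (List.cons_ne_nil _ _) x u₁
                have hshort := shortcut hw hMsub x x
                have e1 : mweight w (tE (x :: ((u₁ :: M') ++ [x]))) =
                    w s(x, u₁) + mweight w (tE (u₁ :: (M' ++ [x]))) := by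
                  rw [show x :: ((u₁ :: M') ++ [x]) = x :: u₁ :: (M' ++ [x]) from rfl]
                  exact mweight_tE_cons_cons _ _ _
                rw [hwK]
                rw [e1] at hshort
                rw [show (u₁ :: M') ++ [u₁] = u₁ :: (M' ++ [u₁]) from rfl,
                  show (u₁ :: M') ++ [x] = u₁ :: (M' ++ [x]) from rfl] at hle
                linarith
          obtain ⟨u₁, rest, husnodup, husmem, hbound⟩ := hus
          have husToFinset : (u₁ :: rest).toFinset = UK := by
            ext u
            rw [List.mem_toFinset]
            exact husmem u
          have huslen : (u₁ :: rest).length = UK.card := by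
            rw [← husToFinset, List.toFinset_card_of_nodup husnodup]
          have husleneven : Even (u₁ :: rest).length := by rw [huslen]; exact hUKeven
          have hrestodd : Odd rest.length := by
            rcases husleneven with ⟨k, hk⟩
            simp only [List.length_cons] at hk
            exact ⟨k - 1, by omega⟩
          set J1 := pairUp (u₁ :: rest) with hJ1def
          set J2 := pairUp (rest ++ [u₁]) with hJ2def
          have hperm : (u₁ :: rest).Perm (rest ++ [u₁]) := (List.perm_append_singleton _ _).symm
          have hJ1deg : ∀ v, deg J1 v = if v ∈ (u₁ :: rest) then 1 else 0 :=
            deg_pairUp _ husnodup husleneven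
          have hJ2deg : ∀ v, deg J2 v = if v ∈ rest ++ [u₁] then 1 else 0 :=
            deg_pairUp _ (hperm.nodup_iff.1 husnodup) (by rw [← hperm.length_eq]; exact husleneven)
          have hJsum : mweight w J1 + mweight w J2 =
              mweight w (tE (u₁ :: (rest ++ [u₁]))) := by
            rw [hJ1def, hJ2def, ← mweight_add, pairUp_rotate rest u₁ u₁ hrestodd]
            rfl
          have hJpar : ∀ (J : Multiset (Sym2 V)), (J = J1 ∨ J = J2) →
              ∀ v, Odd (deg J v) ↔ v ∈ UK := by
            rintro J (rfl | rfl) v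
            · rw [hJ1deg v]
              by_cases h : v ∈ (u₁ :: rest)
              · simp only [h, if_true]
                simp [husmem v |>.1 h]
              · simp only [h, if_false]
                constructor
                · intro h'; simp at h'
                · intro h'; exact absurd ((husmem v).2 h') h
            · rw [hJ2deg v]
              have hmem2 : v ∈ rest ++ [u₁] ↔ v ∈ UK := by
                rw [← hperm.mem_iff]; exact husmem v
              by_cases h : v ∈ rest ++ [u₁]
              · simp only [h, if_true]
                simp [hmem2.1 h]
              · simp only [h, if_false]
                constructor
                · intro h'; simp at h'
                · intro h'; exact absurd (hmem2.2 h') h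
          by_cases hcmp : mweight w J1 ≤ mweight w J2
          · exact ⟨J1, hJpar J1 (Or.inl rfl), by linarith⟩
          · exact ⟨J2, hJpar J2 (Or.inr rfl), by linarith⟩
      obtain ⟨JK, hJKpar, hJKw⟩ := hJK
      refine ⟨J' + JK, ?_, ?_⟩
      · intro v
        rw [deg_add]
        have h1 : Odd (deg J' v) ↔ (v ∈ U ∧ ¬ Connects E x v) := by
          rw [hJ'par v, hU'def, Finset.mem_filter]
        have h2 : Odd (deg JK v) ↔ (v ∈ U ∧ Connects E x v) := by
          rw [hJKpar v, hUKdef, Finset.mem_filter]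
        by_cases hvU : v ∈ U
        · by_cases hvx : Connects E x v
          · have he1 : Even (deg J' v) := by
              rw [← Nat.not_odd_iff_even, h1]; tauto
            have ho2 : Odd (deg JK v) := h2.2 ⟨hvU, hvx⟩
            simp only [hvU, iff_true]
            exact he1.add_odd ho2
          · have ho1 : Odd (deg J' v) := h1.2 ⟨hvU, hvx⟩
            have he2 : Even (deg JK v) := by
              rw [← Nat.not_odd_iff_even, h2]; tauto
            simp only [hvU, iff_true]
            exact ho1.add_even he2
        · have he1 : Even (deg J' v) := by
            rw [← Nat.not_odd_iff_even, h1]; tauto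
          have he2 : Even (deg JK v) := by
            rw [← Nat.not_odd_iff_even, h2]; tauto
          simp only [hvU, iff_false]
          rw [← Nat.not_even_iff_odd]
          intro h
          exact h (he1.add he2)
      · rw [mweight_add]
        have : mweight w K + mweight w R = mweight w E := by
          rw [← mweight_add, hKR]
        linarith

end Stmt15Aux

open Stmt15Aux in
theorem stmt15 {V : Type*} [Fintype V] (w : Sym2 V → ℝ) (hw : IsMetric w)
    (T : Multiset (Sym2 V)) (hTnd : ∀ e ∈ T, ¬ Sym2.IsDiag e)
    (hTeven : ∀ v, Even (deg T v))
    (F : Finset (Sym2 V)) (hFnd : ∀ e ∈ F, ¬ Sym2.IsDiag e)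
    (hFacyc : (SimpleGraph.fromEdgeSet (↑F : Set (Sym2 V))).IsAcyclic)
    (A : Finset (Sym2 V)) (hAF : A ⊆ F)
    (hA : ∀ e ∈ A, ∀ u v : V, e = s(u, v) → ¬ Connects T u v)
    (hparity : ∀ v : V,
      Even {u | Connects (T + A.val + A.val) v u ∧ Odd (deg F.val u)}.ncard) :
    ∃ J : Multiset (Sym2 V), (∀ v, Odd (deg J v) ↔ Odd (deg F.val v)) ∧
      mweight w J ≤ 1 / 2 * mweight w (T + A.val + A.val) ∧
      1 / 2 * mweight w (T + A.val + A.val) = 1 / 2 * mweight w T + ∑ e ∈ A, w e := by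
  classical
  set E : Multiset (Sym2 V) := T + A.val + A.val with hEdef
  have hnd : ∀ e ∈ E, ¬ Sym2.IsDiag e := by
    intro e he
    rcases Multiset.mem_add.1 he with he' | he'
    · rcases Multiset.mem_add.1 he' with he'' | he''
      · exact hTnd e he''
      · exact hFnd e (hAF he'')
    · exact hFnd e (hAF he')
  have heven : ∀ v, Even (deg E v) := by
    intro v
    rw [hEdef, deg_add, deg_add]
    have := hTeven v
    rw [Nat.even_iff] at *
    omega
  set U : Finset V := Finset.univ.filter (fun u => Odd (deg F.val u)) with hUdef
  have hp : ∀ v, Even ((U.filter (fun u => Connects E v u)).card) := by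
    intro v
    have hset : {u | Connects E v u ∧ Odd (deg F.val u)} =
        ↑(U.filter (fun u => Connects E v u)) := by
      ext u
      simp only [Set.mem_setOf_eq, Finset.coe_filter, Finset.mem_filter, hUdef,
        Finset.mem_univ, true_and, Set.mem_setOf_eq]
      tauto
    have := hparity v
    rw [hset, Set.ncard_coe_finset] at this
    exact this
  obtain ⟨J, hpar, hwt⟩ := main_lemma w hw (Multiset.card E + 1) E (lt_add_one _) hnd heven U hp
  have hAval : ∑ e ∈ A, w e = mweight w A.val := rfl
  refine ⟨J, ?_, ?_, ?_⟩
  · intro v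
    rw [hpar v, hUdef]
    simp
  · linarith
  · rw [hEdef, mweight_add, mweight_add, hAval]
    ring
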